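/- For a finite-dimensional unital associative algebra A over ℂ equipped with a Hermitian inner product, there is a bijective correspondence between (i) antilinear involutions t : A → A that reverse multiplication and preserve the unit, and (ii) linear maps s : A → A* to the dual space satisfying s_* ∘ s = id_A which are algebra homomorphisms to the conjugate algebra structure on A*; moreover, linear maps between two such algebras intertwining the antilinear involutions correspond exactly to linear maps satisfying the condition s_B ∘ f = f_* ∘ s_A. -/

import Mathlib

noncomputable section

namespace QAlg

open InnerProductSpace

variable (A : Type*) [NormedAddCommGroup A] [InnerProductSpace ℂ A] [FiniteDimensional ℂ A]

/-- Structure 1: an antilinear involution `t` on the algebra `(A, m, u)` which is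
an order-reversing unital algebra homomorphism. -/
structure StarStruct (m : A →ₗ[ℂ] A →ₗ[ℂ] A) (u : A) where
  t : A → A
  map_add : ∀ x y : A, t (x + y) = t x + t y
  map_smul : ∀ (c : ℂ) (x : A), t (c • x) = starRingEnd ℂ c • t x
  invol : ∀ x : A, t (t x) = x
  antihom : ∀ x y : A, t (m x y) = m (t y) (t x)
  unit : t u = u

/-- Structure 2: a linear map `s : A → A*` to the dual space satisfying
`s_* ∘ s = id` which is an algebra homomorphism to the conjugate algebra on `A*`.
The conjugation functor is expressed via the Riesz (anti-)isomorphism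
`toDual : A ≃ A*`: conjugate elements correspond under `toDual`, the conjugate
multiplication is `(φ, ψ) ↦ toDual (m (toDual⁻¹ ψ) (toDual⁻¹ φ))` (order reversed,
by `(A ⊗ A)* = A* ⊗ A*` with reversal) with unit `toDual u`, and `s_* ∘ s = id`
is read through the identification `A** = A`. -/
structure DualStruct (m : A →ₗ[ℂ] A →ₗ[ℂ] A) (u : A) where
  s : A →ₗ[ℂ] StrongDual ℂ A
  invol : ∀ x : A, (toDual ℂ A).symm (s ((toDual ℂ A).symm (s x))) = x
  mul : ∀ x y : A, s (m x y) =
    toDual ℂ A (m ((toDual ℂ A).symm (s y)) ((toDual ℂ A).symm (s x)))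
  unit : s u = toDual ℂ A u

variable {A} {m : A →ₗ[ℂ] A →ₗ[ℂ] A} {u : A}

/-- The conjugation `(-)_*` is the antilinear Riesz isomorphism `toDual`, so `s = toDual ∘ t`
is linear, and each axiom of `t` transports along `toDual` to the matching axiom of `s`. -/
def StarStruct.toDualStruct (T : StarStruct A m u) : DualStruct A m u where
  s :=
    { toFun := fun x => toDual ℂ A (T.t x)
      map_add' := fun x y => by rw [T.map_add]; exact (toDual ℂ A).map_add _ _
      map_smul' := fun c x => by simp [T.map_smul, map_smulₛₗ] }
  invol x := by simp [T.invol]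
  mul x y := by simp [T.antihom]
  unit := by simp [T.unit]

def DualStruct.toStarStruct (S : DualStruct A m u) : StarStruct A m u where
  t x := (toDual ℂ A).symm (S.s x)
  map_add x y := by simp
  map_smul c x := by simp [map_smulₛₗ]
  invol := S.invol
  antihom x y := by simp [S.mul]
  unit := by simp [S.unit]

def starStructEquivDualStruct : StarStruct A m u ≃ DualStruct A m u where
  toFun := StarStruct.toDualStruct
  invFun := DualStruct.toStarStruct
  left_inv := by
    rintro ⟨t, _, _, _, _, _⟩
    simp [DualStruct.toStarStruct, StarStruct.toDualStruct]
  right_inv := by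
    rintro ⟨s, _, _, _⟩
    simp only [DualStruct.toStarStruct, StarStruct.toDualStruct, DualStruct.mk.injEq]
    ext x
    simp

theorem intertwines_iff_toDual_intertwines {B : Type*} [NormedAddCommGroup B]
    [InnerProductSpace ℂ B] [CompleteSpace B]
    {tA : A → A} {tB : B → B} {sA : A → StrongDual ℂ A} {sB : B → StrongDual ℂ B}
    (hA : ∀ x, sA x = toDual ℂ A (tA x)) (hB : ∀ x, sB x = toDual ℂ B (tB x))
    (f : A →ₗ[ℂ] B) :
    (∀ x, tB (f x) = f (tA x)) ↔
      ∀ x, sB (f x) = toDual ℂ B (f ((toDual ℂ A).symm (sA x))) := by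
  simp only [hA, hB, LinearIsometryEquiv.symm_apply_apply, (toDual ℂ B).injective.eq_iff]

theorem stmt3 (m : A →ₗ[ℂ] A →ₗ[ℂ] A) (u : A)
    -- the correspondence s(φ) = (t(φ))_* = toDual (t φ) is bijective:
    (B : Type*) [NormedAddCommGroup B] [InnerProductSpace ℂ B] [FiniteDimensional ℂ B]
    (n : B →ₗ[ℂ] B →ₗ[ℂ] B) (v : B) :
    (∃ e : StarStruct A m u ≃ DualStruct A m u,
      ∀ (T : StarStruct A m u) (x : A), (e T).s x = toDual ℂ A (T.t x)) ∧
    -- and linear maps intertwining the antilinear involutions correspond exactly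
    -- to linear maps satisfying `s_B ∘ f = f_* ∘ s_A`:
    (∀ (TA : StarStruct A m u) (TB : StarStruct B n v)
        (SA : DualStruct A m u) (SB : DualStruct B n v),
      (∀ x : A, SA.s x = toDual ℂ A (TA.t x)) →
      (∀ x : B, SB.s x = toDual ℂ B (TB.t x)) →
      ∀ f : A →ₗ[ℂ] B,
        ((∀ x : A, TB.t (f x) = f (TA.t x)) ↔
          (∀ x : A, SB.s (f x) = toDual ℂ B (f ((toDual ℂ A).symm (SA.s x)))))) :=
  ⟨⟨starStructEquivDualStruct, fun _ _ => rfl⟩,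
    fun _ _ _ _ hA hB => intertwines_iff_toDual_intertwines hA hB⟩

end QAlg
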